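/- Assume g is a nondegenerate symmetric bilinear form on V and J : V → V is linear with J ∘ J = -id_V and g(J X, J Y) = g(X, Y) for all X, Y ∈ V, and define ω(X, Y) := g(J X, Y). Then for any real numbers a, b, c and 𝒥 := a 𝒥_{1,J} + b 𝒥_g + c 𝒥_ω, one has G₀(𝒥 u, 𝒥 v) = (-a² - b² + c²) G₀(u, v) + 2ac · G₀(u, 𝒥_g v) - 2bc · G₀(𝒥_{1,J} u, v) for all u, v ∈ E. -/

import Mathlib

noncomputable section

variable {V : Type*} [AddCommGroup V] [Module ℝ V] [FiniteDimensional ℝ V]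

/-- The canonical pairing `G₀` on `E = V × V*`. -/
def Gz (u v : V × Module.Dual ℝ V) : ℝ := (u.2 v.1 + v.2 u.1) / 2

/-- The endomorphism `𝒥_{λ,J}` of `E = V × V*`, `𝒥_{λ,J}(X,ξ) = (J X, λ J* ξ)`. -/
def Jlam (lam : ℝ) (J : V →ₗ[ℝ] V) (u : V × Module.Dual ℝ V) : V × Module.Dual ℝ V :=
  (J u.1, lam • J.dualMap u.2)

/-- The musical isomorphism `♯_h = (♭_h)⁻¹` of a nondegenerate bilinear form `h`. -/
def sharp (h : LinearMap.BilinForm ℝ V) (hh : LinearMap.BilinForm.Nondegenerate h) :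
    Module.Dual ℝ V →ₗ[ℝ] V :=
  (LinearMap.BilinForm.toDual h hh).symm

/-- The endomorphism `𝒥_h` of `E = V × V*`, `𝒥_h(X,ξ) = (-♯_h ξ, ♭_h X)`. -/
def Jform (h : LinearMap.BilinForm ℝ V) (hh : LinearMap.BilinForm.Nondegenerate h)
    (u : V × Module.Dual ℝ V) : V × Module.Dual ℝ V :=
  (-(sharp h hh u.2), h u.1)

/-!
On `E = V × V*` the endomorphisms `A = 𝒥_{1,J}` and `B = 𝒥_g` are `G₀`-self-adjoint, square to
`-1` and anticommute (the last because `J` is `g`-skew-adjoint), and `𝒥_ω = B ∘ A` since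
`♭_ω = ♭_g ∘ J`. So `A`, `B`, `BA` form a quaternionic triple in which `BA` is `G₀`-skew-adjoint,
and these relations reduce each of the nine terms in the expansion of `G₀(𝒥u, 𝒥v)` to
`± G₀(u, v)`, `± G₀(u, Bv)` or `± G₀(Au, v)`.
-/

open LinearMap (BilinForm)

section BilinForm

variable {R M : Type*} [CommRing R] [AddCommGroup M] [Module R M]

theorem LinearMap.BilinForm.apply_quaternionic_combination (G : BilinForm R M)
    (A B : Module.End R M) (hA : G.IsSelfAdjoint A) (hB : G.IsSelfAdjoint B)
    (hA2 : ∀ u, A (A u) = -u) (hB2 : ∀ u, B (B u) = -u) (hAB : ∀ u, A (B u) = -B (A u))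
    (a b c : R) (u v : M) :
    G (a • A u + b • B u + c • B (A u)) (a • A v + b • B v + c • B (A v)) =
      (-a ^ 2 - b ^ 2 + c ^ 2) * G u v + 2 * a * c * G u (B v) - 2 * b * c * G (A u) v := by
  have hAA : G (A u) (A v) = -G u v := by rw [hA, hA2, map_neg]
  have hBB : G (B u) (B v) = -G u v := by rw [hB, hB2, map_neg]
  have hCC : G (B (A u)) (B (A v)) = G u v := by rw [hB, hB2, map_neg, hAA, neg_neg]
  have hAB' : G (A u) (B v) = -G (B u) (A v) := by rw [hA, hAB, map_neg, hB]
  have hAC : G (A u) (B (A v)) = G u (B v) := by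
    rw [hA, hAB, hA2, map_neg, map_neg, map_neg, neg_neg]
  have hCA : G (B (A u)) (A v) = G u (B v) := by rw [hB, hAC]
  have hBC : G (B u) (B (A v)) = -G (A u) v := by rw [hB, hB2, map_neg, hA]
  have hCB : G (B (A u)) (B v) = -G (A u) v := by rw [hB, hB2, map_neg]
  simp only [map_add, map_smul, LinearMap.add_apply, LinearMap.smul_apply, smul_eq_mul]
  linear_combination a ^ 2 * hAA + b ^ 2 * hBB + c ^ 2 * hCC + a * b * hAB' + a * c * (hAC + hCA)
    + b * c * (hBC + hCB)

theorem LinearMap.BilinForm.isSkewAdjoint_of_isometry {g : BilinForm R M} {J : Module.End R M}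
    (hJ : ∀ X, J (J X) = -X) (hcompat : ∀ X Y, g (J X) (J Y) = g X Y) : g.IsSkewAdjoint J := by
  intro X Y
  rw [Pi.neg_apply, map_neg, ← hcompat X, hJ, map_neg, neg_neg]

theorem LinearMap.BilinForm.Nondegenerate.comp_of_bijective {g : BilinForm R M}
    (hg : g.Nondegenerate) {J : Module.End R M} (hJ : Function.Bijective J) :
    (g ∘ₗ J).Nondegenerate := by
  refine ⟨fun X hX => hJ.1 ?_, fun Y hY => hg.2 Y fun Z => ?_⟩
  · rw [map_zero]
    exact hg.1 (J X) hX
  · obtain ⟨X, rfl⟩ := hJ.2 Z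
    exact hY X

end BilinForm

section GeneralizedComplexStructures

omit [FiniteDimensional ℝ V] in
def gzBilin : BilinForm ℝ (V × Module.Dual ℝ V) :=
  LinearMap.mk₂ ℝ Gz
    (fun u u' v => by
      simp only [Gz, Prod.fst_add, Prod.snd_add, map_add, LinearMap.add_apply]
      ring)
    (fun r u v => by
      simp only [Gz, Prod.smul_fst, Prod.smul_snd, map_smul, LinearMap.smul_apply, smul_eq_mul]
      ring)
    (fun u v v' => by
      simp only [Gz, Prod.fst_add, Prod.snd_add, map_add, LinearMap.add_apply]
      ring)
    (fun r u v => by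
      simp only [Gz, Prod.smul_fst, Prod.smul_snd, map_smul, LinearMap.smul_apply, smul_eq_mul]
      ring)

omit [FiniteDimensional ℝ V] in
def jlamEnd (lam : ℝ) (J : V →ₗ[ℝ] V) : Module.End ℝ (V × Module.Dual ℝ V) :=
  J.prodMap (lam • J.dualMap)

def jformEnd (h : BilinForm ℝ V) (hh : h.Nondegenerate) : Module.End ℝ (V × Module.Dual ℝ V) :=
  (-(sharp h hh) ∘ₗ LinearMap.snd ℝ V _).prod (h ∘ₗ LinearMap.fst ℝ V _)

omit [FiniteDimensional ℝ V] in
theorem isSelfAdjoint_jlamEnd_one (J : V →ₗ[ℝ] V) : gzBilin.IsSelfAdjoint (jlamEnd 1 J) := by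
  rintro ⟨X, ξ⟩ ⟨Y, η⟩
  show ((1 : ℝ) • ξ (J Y) + η (J X)) / 2 = (ξ (J Y) + (1 : ℝ) • η (J X)) / 2
  rw [one_smul, one_smul]

omit [FiniteDimensional ℝ V] in
theorem jlam_jlam {lam : ℝ} (hlam : lam ^ 2 = 1) {J : V →ₗ[ℝ] V} (hJ : ∀ X, J (J X) = -X)
    (u : V × Module.Dual ℝ V) : Jlam lam J (Jlam lam J u) = -u := by
  ext
  · simp [Jlam, hJ]
  · simp [Jlam, hJ, smul_smul, ← sq, hlam]

variable {h : BilinForm ℝ V} (hh : h.Nondegenerate)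

theorem apply_sharp (ξ : Module.Dual ℝ V) : h (sharp h hh ξ) = ξ := by
  ext
  exact LinearMap.BilinForm.apply_toDual_symm_apply ξ _

theorem sharp_apply (X : V) : sharp h hh (h X) = X :=
  (h.toDual hh).symm_apply_apply X

theorem sharp_eq_of_apply_eq {X : V} {ξ : Module.Dual ℝ V} (hX : h X = ξ) : sharp h hh ξ = X := by
  rw [← hX, sharp_apply]

theorem isSelfAdjoint_jformEnd (hsym : ∀ X Y, h X Y = h Y X) :
    gzBilin.IsSelfAdjoint (jformEnd h hh) := by
  rintro ⟨X, ξ⟩ ⟨Y, η⟩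
  have hswap : η (sharp h hh ξ) = ξ (sharp h hh η) := by
    rw [← apply_sharp hh η, sharp_apply, hsym, apply_sharp]
  show (h X Y + η (-sharp h hh ξ)) / 2 = (ξ (-sharp h hh η) + h Y X) / 2
  rw [map_neg, map_neg, hswap, hsym X Y, add_comm]

theorem jform_jform (u : V × Module.Dual ℝ V) : Jform h hh (Jform h hh u) = -u := by
  ext
  · simp [Jform, sharp_apply]
  · simp [Jform, apply_sharp]

variable {J : V →ₗ[ℝ] V}

theorem sharp_dualMap (hJ : h.IsSkewAdjoint J) (ξ : Module.Dual ℝ V) :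
    sharp h hh (J.dualMap ξ) = -J (sharp h hh ξ) := by
  refine sharp_eq_of_apply_eq hh (LinearMap.ext fun Y => ?_)
  rw [map_neg, LinearMap.neg_apply, hJ, Pi.neg_apply, map_neg, neg_neg, apply_sharp,
    LinearMap.dualMap_apply]

theorem sharp_comp (hJ : ∀ X, J (J X) = -X) (hω : (h ∘ₗ J).Nondegenerate) (ξ : Module.Dual ℝ V) :
    sharp (h ∘ₗ J) hω ξ = -J (sharp h hh ξ) :=
  sharp_eq_of_apply_eq hω (by rw [LinearMap.comp_apply, map_neg, hJ, neg_neg, apply_sharp])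

theorem jlam_jform (hJ : h.IsSkewAdjoint J) (u : V × Module.Dual ℝ V) :
    Jlam 1 J (Jform h hh u) = -Jform h hh (Jlam 1 J u) := by
  ext Y
  · simp [Jlam, Jform, sharp_dualMap hh hJ]
  · simp [Jlam, Jform, hJ _ Y]

theorem jform_comp (hJ : ∀ X, J (J X) = -X) (hskew : h.IsSkewAdjoint J)
    (hω : (h ∘ₗ J).Nondegenerate) (u : V × Module.Dual ℝ V) :
    Jform (h ∘ₗ J) hω u = Jform h hh (Jlam 1 J u) := by
  ext
  · simp [Jform, Jlam, sharp_comp hh hJ, sharp_dualMap hh hskew]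
  · simp [Jform, Jlam]

end GeneralizedComplexStructures

/-- For an almost Hermitian structure `(g, J)`, `ω = g(J·,·)` and
`𝒥 = a 𝒥_{1,J} + b 𝒥_g + c 𝒥_ω`, one has
`G₀(𝒥u, 𝒥v) = (-a²-b²+c²) G₀(u,v) + 2ac G₀(u, 𝒥_g v) - 2bc G₀(𝒥_{1,J} u, v)`. -/
theorem spherical_combination_pairing (g : LinearMap.BilinForm ℝ V)
    (hg : LinearMap.BilinForm.Nondegenerate g)
    (hsym : ∀ X Y : V, g X Y = g Y X)
    (J : V →ₗ[ℝ] V) (hJ : ∀ X : V, J (J X) = -X)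
    (hcompat : ∀ X Y : V, g (J X) (J Y) = g X Y) (a b c : ℝ) :
    ∃ hω : LinearMap.BilinForm.Nondegenerate (g ∘ₗ J),
      let 𝒥 : (V × Module.Dual ℝ V) → (V × Module.Dual ℝ V) :=
        fun w => a • Jlam 1 J w + b • Jform g hg w + c • Jform (g ∘ₗ J) hω w
      ∀ u v : V × Module.Dual ℝ V,
        Gz (𝒥 u) (𝒥 v) = (-a ^ 2 - b ^ 2 + c ^ 2) * Gz u v
          + 2 * a * c * Gz u (Jform g hg v) - 2 * b * c * Gz (Jlam 1 J u) v := by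
  have hskew : g.IsSkewAdjoint J := BilinForm.isSkewAdjoint_of_isometry hJ hcompat
  have hJbij : Function.Bijective J :=
    Function.bijective_iff_has_inverse.2
      ⟨fun X => -J X, fun X => by simp [hJ], fun X => by simp [hJ]⟩
  refine ⟨hg.comp_of_bijective hJbij, fun u v => ?_⟩
  simp only [jform_comp hg hJ hskew]
  exact gzBilin.apply_quaternionic_combination (jlamEnd 1 J) (jformEnd g hg)
    (isSelfAdjoint_jlamEnd_one J) (isSelfAdjoint_jformEnd hg hsym) (jlam_jlam (one_pow 2) hJ)
    (jform_jform hg) (jlam_jform hg hskew) a b c u v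

end
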